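/- Let A, B be positive definite d×d matrices, M invertible, ε > 0. Define F = A^{-1}((ε/2)I + (A M B Mᵀ + (ε²/4)I)^{1/2}) and G = ε B^{-1} + Mᵀ F^{-1} M, where the square root is defined by conjugation with A^{1/2}. Then F and G are symmetric positive definite and satisfy the system: F A F − ε F − M B Mᵀ = 0 and G − Mᵀ F^{-1} M = ε B^{-1}; consequently the block matrix [[F, −M],[−Mᵀ, G]] is positive definite. -/

import Mathlib

/-!
Write `S = A^{1/2}`, `N = M B Mᵀ` and `R = (S N S + (ε²/4) I)^{1/2}`. Then `F = S⁻¹ P S⁻¹` with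
`P = (ε/2) I + R ≻ 0`, and `R² = S N S + (ε²/4) I` says exactly `P² = ε P + S N S`; conjugating
by `S⁻¹` turns this into `F A F = ε F + N`. `G` is `ε B⁻¹ ≻ 0` plus the positive semidefinite
`Mᵀ F⁻¹ M`, and the block matrix is positive definite because its Schur complement `ε B⁻¹` is.
-/

open Matrix

open Classical in
/-- The positive semidefinite square root (zero if not positive semidefinite). -/
noncomputable def psqrt {d : ℕ} (X : Matrix (Fin d) (Fin d) ℝ) : Matrix (Fin d) (Fin d) ℝ :=
  if h : X.PosSemidef then
    h.1.eigenvectorUnitary.1 * diagonal (Real.sqrt ∘ h.1.eigenvalues) *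
      (star h.1.eigenvectorUnitary : Matrix (Fin d) (Fin d) ℝ)
  else 0

open scoped MatrixOrder ComplexOrder

section psqrt

variable {d : ℕ} {X : Matrix (Fin d) (Fin d) ℝ}

lemma psqrt_eq_sqrt (hX : X.PosSemidef) : psqrt X = CFC.sqrt X := by
  rw [psqrt, dif_pos hX, CFC.sqrt_eq_cfc, cfc_nnreal_eq_real _ X, hX.1.cfc_eq]
  simp [IsHermitian.cfc, Function.comp_def, max_eq_left (hX.eigenvalues_nonneg _)]

lemma posSemidef_psqrt (hX : X.PosSemidef) : (psqrt X).PosSemidef :=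
  psqrt_eq_sqrt hX ▸ (CFC.sqrt_nonneg X).posSemidef

lemma psqrt_mul_self (hX : X.PosSemidef) : psqrt X * psqrt X = X := by
  rw [psqrt_eq_sqrt hX, CFC.sqrt_mul_sqrt_self X hX.nonneg]

end psqrt

lemma Matrix.PosDef.posDef_fromBlocks₁₁_iff {𝕜 m n : Type*} [RCLike 𝕜] [Fintype m] [Fintype n]
    [DecidableEq m] [DecidableEq n] {A : Matrix m m 𝕜} (B : Matrix m n 𝕜) (D : Matrix n n 𝕜)
    (hA : A.PosDef) : (fromBlocks A B Bᴴ D).PosDef ↔ (D - Bᴴ * A⁻¹ * B).PosDef := by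
  have := hA.isUnit.invertible
  have hdet : (fromBlocks A B Bᴴ D).det = A.det * (D - Bᴴ * A⁻¹ * B).det := by
    rw [det_fromBlocks₁₁, invOf_eq_nonsing_inv]
  refine ⟨fun h => ?_, fun h => ?_⟩
  · rw [((PosDef.fromBlocks₁₁ B D hA).1 h.posSemidef).posDef_iff_det_ne_zero]
    exact right_ne_zero_of_mul (hdet ▸ h.det_pos.ne')
  · rw [((PosDef.fromBlocks₁₁ B D hA).2 h.posSemidef).posDef_iff_det_ne_zero, hdet]
    exact mul_ne_zero hA.det_pos.ne' h.det_pos.ne'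

lemma add_half_smul_one_mul_self {α : Type*} [Ring α] [Algebra ℝ α] {c : ℝ} {X R : α}
    (hR : R * R = X + (c ^ 2 / 4) • 1) :
    ((c / 2) • 1 + R) * ((c / 2) • 1 + R) = c • ((c / 2) • 1 + R) + X := by
  simp only [add_mul, mul_add, smul_mul_assoc, mul_smul_comm, one_mul, mul_one, hR, smul_add,
    smul_smul]
  match_scalars <;> ring

section conj

variable {n α : Type*} [Fintype n] [DecidableEq n] [CommRing α] {S : Matrix n n α}

lemma inv_conj_mul_mul_self_mul_inv_conj (hS : IsUnit S) (P Q : Matrix n n α) :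
    S⁻¹ * P * S⁻¹ * (S * S) * (S⁻¹ * Q * S⁻¹) = S⁻¹ * (P * Q) * S⁻¹ := by
  have := hS.invertible
  simp [Matrix.mul_assoc, ← invOf_eq_nonsing_inv]

lemma mul_self_inv_mul_add_conj (hS : IsUnit S) (c : α) (R : Matrix n n α) :
    (S * S)⁻¹ * (c • 1 + S * R * S⁻¹) = S⁻¹ * (c • 1 + R) * S⁻¹ := by
  have := hS.invertible
  simp [Matrix.mul_inv_rev, Matrix.mul_assoc, Matrix.mul_add, Matrix.add_mul,
    ← invOf_eq_nonsing_inv]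

end conj

lemma riccati_solution {n : Type*} [Fintype n] [DecidableEq n] {S R N F : Matrix n n ℝ} {ε : ℝ}
    (hε : 0 < ε) (hS : S.IsHermitian) (hSu : IsUnit S) (hR : R.PosSemidef)
    (hRR : R * R = S * N * S + (ε ^ 2 / 4) • 1)
    (hF : F = (S * S)⁻¹ * ((ε / 2) • 1 + S * R * S⁻¹)) :
    F.PosDef ∧ F * (S * S) * F - ε • F - N = 0 := by
  have hP : ((ε / 2) • 1 + R).PosDef := (PosDef.one.smul (half_pos hε)).add_posSemidef hR
  rw [mul_self_inv_mul_add_conj hSu] at hF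
  subst hF
  constructor
  · have := (IsUnit.posDef_star_left_conjugate_iff (isUnit_nonsing_inv_iff.2 hSu)).2 hP
    rwa [star_eq_conjTranspose, hS.inv.eq] at this
  · have := hSu.invertible
    rw [inv_conj_mul_mul_self_mul_inv_conj hSu, add_half_smul_one_mul_self hRR]
    simp [Matrix.mul_add, Matrix.add_mul, Matrix.mul_assoc, ← invOf_eq_nonsing_inv]

theorem stmt18_general {d : ℕ} (A B M : Matrix (Fin d) (Fin d) ℝ) (hA : A.PosDef) (hB : B.PosDef)
    (ε : ℝ) (hε : 0 < ε)
    (F G : Matrix (Fin d) (Fin d) ℝ)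
    (hF : F = A⁻¹ * ((ε / 2) • 1 +
        psqrt A * psqrt (psqrt A * (M * B * Mᵀ) * psqrt A + (ε ^ 2 / 4) • 1) * (psqrt A)⁻¹))
    (hG : G = ε • B⁻¹ + Mᵀ * F⁻¹ * M) :
    F.PosDef ∧ G.PosDef ∧
      F * A * F - ε • F - M * B * Mᵀ = 0 ∧
      G - Mᵀ * F⁻¹ * M = ε • B⁻¹ ∧
      (Matrix.fromBlocks F (-M) (-Mᵀ) G).PosDef := by
  set S := psqrt A
  have hSS : S * S = A := psqrt_mul_self hA.posSemidef
  have hSh : S.IsHermitian := (posSemidef_psqrt hA.posSemidef).1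
  have hSu : IsUnit S := isUnit_of_mul_isUnit_left (hSS ▸ hA.isUnit)
  have hC : (S * (M * B * Mᵀ) * S + (ε ^ 2 / 4) • 1).PosSemidef := by
    have hN : (M * B * Mᵀ).PosSemidef := by
      simpa using hB.posSemidef.mul_mul_conjTranspose_same M
    have hSNS := hN.conjTranspose_mul_mul_same S
    rw [hSh.eq] at hSNS
    exact hSNS.add (PosSemidef.one.smul (by positivity))
  obtain ⟨hFpd, hRiccati⟩ := riccati_solution hε hSh hSu
    (posSemidef_psqrt hC) (psqrt_mul_self hC) (hSS ▸ hF)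
  have hSchur : G - Mᵀ * F⁻¹ * M = ε • B⁻¹ := by rw [hG, add_sub_cancel_right]
  have hεB : (ε • B⁻¹).PosDef := hB.inv.smul hε
  refine ⟨hFpd, ?_, hSS ▸ hRiccati, hSchur, ?_⟩
  · rw [hG]
    simpa using hεB.add_posSemidef (hFpd.inv.posSemidef.conjTranspose_mul_mul_same M)
  · simpa using (PosDef.posDef_fromBlocks₁₁_iff (-M) G hFpd).2 (by simpa [hSchur] using hεB)

theorem stmt18 {d : ℕ} (A B M : Matrix (Fin d) (Fin d) ℝ) (hA : A.PosDef) (hB : B.PosDef)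
    (hM : IsUnit M.det) (ε : ℝ) (hε : 0 < ε)
    (F G : Matrix (Fin d) (Fin d) ℝ)
    (hF : F = A⁻¹ * ((ε / 2) • 1 +
        psqrt A * psqrt (psqrt A * (M * B * Mᵀ) * psqrt A + (ε ^ 2 / 4) • 1) * (psqrt A)⁻¹))
    (hG : G = ε • B⁻¹ + Mᵀ * F⁻¹ * M) :
    F.PosDef ∧ G.PosDef ∧
      F * A * F - ε • F - M * B * Mᵀ = 0 ∧
      G - Mᵀ * F⁻¹ * M = ε • B⁻¹ ∧
      (Matrix.fromBlocks F (-M) (-Mᵀ) G).PosDef :=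
  stmt18_general A B M hA hB ε hε F G hF hG
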